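/- arXiv:1605.07990 — 3 statements merged into one kernel-verified Lean document; each statement's English description precedes it below -/
import Mathlib

section
/- Suppose Ŝ satisfies: Î(Ŝ) = (1+ε_1)·I_c(Ŝ), I_c(Ŝ) ≤ (1+ε̂)·I(Ŝ), Î(Ŝ) ≥ (1−1/e)·Î(S*), Î(S*) ≥ (1−ε*)·OPT, and (for contradiction) I(Ŝ) < (1−1/e−ε)·OPT. Then I(Ŝ) ≥ (1 − 1/e − ε')·OPT where ε' = (ε_1 + ε̂ + ε_1·ε̂)·(1−1/e−ε) + (1−1/e)·ε*. -/
/-- Step (A) of the contradiction argument in the D-SSA approximation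
guarantee (Theorem 8). -/
theorem stmt_12 (I Ihat Ic IhatStar OPT ε1 εhat εstar ε : ℝ)
    (hI : 0 ≤ I) (hIhat : 0 ≤ Ihat) (hIc : 0 ≤ Ic) (hIhatStar : 0 ≤ IhatStar)
    (hOPT : 0 < OPT)
    (hε1 : 0 ≤ ε1) (hεhat : 0 ≤ εhat) (hεstar : 0 ≤ εstar)
    (hε : ε ∈ Set.Ioo (0:ℝ) 1) (hεe : 1 - 1 / Real.exp 1 - ε > 0)
    (h1 : Ihat = (1 + ε1) * Ic)
    (h2 : Ic ≤ (1 + εhat) * I)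
    (h3 : Ihat ≥ (1 - 1 / Real.exp 1) * IhatStar)
    (h4 : IhatStar ≥ (1 - εstar) * OPT)
    (h5 : I < (1 - 1 / Real.exp 1 - ε) * OPT) :
    I ≥ (1 - 1 / Real.exp 1 -
      ((ε1 + εhat + ε1 * εhat) * (1 - 1 / Real.exp 1 - ε) +
        (1 - 1 / Real.exp 1) * εstar)) * OPT := by
  have he : (1:ℝ) < Real.exp 1 := by
    have := Real.exp_one_gt_d9; linarith
  have h6 : 0 < 1 - 1 / Real.exp 1 := by
    have : 1 / Real.exp 1 < 1 := by
      rw [div_lt_one (by positivity)]; exact he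
    linarith
  obtain ⟨hε0, hε1'⟩ := hε
  nlinarith [mul_nonneg hε1 hεhat, mul_nonneg (mul_nonneg hε1 hεhat) hI,
    mul_le_mul_of_nonneg_left h2 (by linarith : (0:ℝ) ≤ 1 + ε1),
    mul_le_mul_of_nonneg_left h4 h6.le,
    mul_nonneg hε1 hI, mul_nonneg hεhat hI,
    mul_le_mul_of_nonneg_left h5.le (by nlinarith : (0:ℝ) ≤ ε1 + εhat + ε1*εhat)]
end

section
/- In the stopping-rule algorithm, let Z_1, Z_2, ... be i.i.d. Bernoulli with mean μ = I/n ∈ (0,1], let T = min{t : ∑_{j≤t} Z_j ≥ Λ₂} and output I_c = nΛ₂/T. If Pr[(1/L)∑_{j≤L} Z_j ≥ (1+ε)μ] ≤ δ for L = ⌊nΛ₂/((1+ε)I)⌋ where Λ₂ = 1+(1+ε)Υ(ε,δ), then Pr[I_c > (1+ε)·I] ≤ δ. -/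
open MeasureTheory

/-- Correctness of the Estimate-Inf stopping rule (Lemma 3): if the empirical
mean over `L = ⌊nΛ₂/((1+ε)I)⌋` samples exceeds `(1+ε)μ` with probability at
most `δ`, then the stopping-rule output `I_c = nΛ₂/T` exceeds `(1+ε)I` with
probability at most `δ`. -/
theorem stmt_14 {Ω : Type*} [MeasurableSpace Ω]
    (P : Measure Ω) [IsProbabilityMeasure P]
    (Z : ℕ → Ω → ℝ) (n I μ ε δ : ℝ)
    (hn : 0 < n) (hμ : μ ∈ Set.Ioc (0:ℝ) 1) (hI : I = n * μ)
    (hε : ε ∈ Set.Ioo (0:ℝ) 1) (hδ : δ ∈ Set.Ioo (0:ℝ) 1)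
    (hZ : ∀ i ω, Z i ω = 0 ∨ Z i ω = 1)
    (Λ₂ : ℝ)
    (hΛ : Λ₂ = 1 + (1 + ε) * ((2 + 2 * ε / 3) * Real.log (1 / δ) / ε ^ 2))
    (T : Ω → ℕ)
    (hT : ∀ ω, T ω = sInf {t : ℕ | Λ₂ ≤ ∑ j ∈ Finset.range t, Z j ω})
    (Ic : Ω → ℝ) (hIc : ∀ ω, Ic ω = n * Λ₂ / (T ω : ℝ))
    (L : ℤ) (hL : L = ⌊n * Λ₂ / ((1 + ε) * I)⌋)
    (hbound :
      P {ω | (1 + ε) * μ ≤ (1 / (L : ℝ)) * ∑ j ∈ Finset.range L.toNat, Z j ω} ≤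
        ENNReal.ofReal δ) :
    P {ω | (1 + ε) * I < Ic ω} ≤ ENNReal.ofReal δ := by
  obtain ⟨hμ0, hμ1⟩ := hμ
  obtain ⟨hε0, hε1⟩ := hε
  obtain ⟨hδ0, hδ1⟩ := hδ
  have hε1' : (0:ℝ) < 1 + ε := by linarith
  have hI0 : 0 < I := by rw [hI]; positivity
  have hlog : 0 < Real.log (1 / δ) := by
    apply Real.log_pos
    rw [lt_div_iff₀ hδ0]; linarith
  have hΛpos : 0 < Λ₂ := by
    rw [hΛ]
    have : 0 ≤ (1 + ε) * ((2 + 2 * ε / 3) * Real.log (1 / δ) / ε ^ 2) := by positivity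
    linarith
  refine le_trans (measure_mono ?_) hbound
  intro ω hω
  simp only [Set.mem_setOf_eq] at hω ⊢
  -- `Ic ω > (1+ε) I > 0`, so `T ω ≠ 0`
  rw [hIc] at hω
  have hIcpos : 0 < n * Λ₂ / (T ω : ℝ) := lt_trans (by positivity) hω
  have hT0 : T ω ≠ 0 := by
    intro h
    rw [h] at hIcpos
    simp at hIcpos
  have hTpos : (0:ℝ) < (T ω : ℝ) := by
    exact_mod_cast Nat.pos_of_ne_zero hT0
  -- T ω < n Λ₂ / ((1+ε) I)
  have hTlt : (T ω : ℝ) < n * Λ₂ / ((1 + ε) * I) := by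
    rw [lt_div_iff₀ (by positivity)]
    rw [lt_div_iff₀ hTpos] at hω
    nlinarith
  have hTL : (T ω : ℤ) ≤ L := by
    rw [hL, Int.le_floor]
    exact_mod_cast hTlt.le
  have hLpos : 0 < L := lt_of_lt_of_le (by exact_mod_cast Nat.pos_of_ne_zero hT0) hTL
  have hTLnat : T ω ≤ L.toNat := by omega
  -- The set defining T is nonempty, so Λ₂ ≤ ∑_{j < T ω} Z j ω
  have hmem : Λ₂ ≤ ∑ j ∈ Finset.range (T ω), Z j ω := by
    have hne : {t : ℕ | Λ₂ ≤ ∑ j ∈ Finset.range t, Z j ω}.Nonempty := by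
      by_contra h
      rw [Set.not_nonempty_iff_eq_empty] at h
      rw [hT ω, h, Nat.sInf_empty] at hT0
      exact hT0 rfl
    have := Nat.sInf_mem hne
    rw [← hT ω] at this
    exact this
  -- monotonicity of the partial sums
  have hsum : Λ₂ ≤ ∑ j ∈ Finset.range L.toNat, Z j ω := by
    refine hmem.trans (Finset.sum_le_sum_of_subset_of_nonneg
      (Finset.range_subset_range.2 hTLnat) ?_)
    intro i _ _
    rcases hZ i ω with h | h <;> rw [h] <;> norm_num
  -- conclude
  have hLR : (0:ℝ) < (L : ℝ) := by exact_mod_cast hLpos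
  have hLle : (L : ℝ) ≤ n * Λ₂ / ((1 + ε) * I) := by
    rw [hL]; exact Int.floor_le _
  have key : (1 + ε) * μ * (L : ℝ) ≤ Λ₂ := by
    have : (1 + ε) * μ * (n * Λ₂ / ((1 + ε) * I)) = Λ₂ := by
      rw [hI]; field_simp
    nlinarith
  rw [one_div, ← div_eq_inv_mul, le_div_iff₀ hLR]
  linarith
end

section
/- Suppose N = ((2 + (2/3)ε̂)/ε̂²)·L·(n/I) and N = 2^{t-1}·(2+2ε/3)·L/ε² for the same L = ln(3t/δ) > 0, with I_c ≤ (1+ε)·I and ε̂ ≤ ε, and let ε₂ be defined by ε₂² = ε²·n(1+ε)/(2^{t-1}·I_c). Then ε̂²/ε₂² = ((2+2ε̂/3)/(2+2ε/3))·(I_c/((1+ε)·I)) ≤ 1, hence ε̂ ≤ ε₂. -/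
/-- Step (B), first part, in the proof of Theorem 8: `ε̂ ≤ ε₂`. -/
theorem stmt_17 (n I Ic N L ε εhat ε2 : ℝ) (t : ℕ)
    (hn : 0 < n) (hI : 0 < I) (hIc : 0 < Ic) (hN : 0 < N) (hL : 0 < L)
    (hε : ε ∈ Set.Ioo (0:ℝ) 1) (hεhat : εhat ∈ Set.Ioo (0:ℝ) 1)
    (hle : εhat ≤ ε) (hIcI : Ic ≤ (1 + ε) * I)
    (ht : 1 ≤ t)
    (hN1 : N = 2 ^ (t - 1) * (2 + 2 * ε / 3) * L / ε ^ 2)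
    (hN2 : N = (2 + 2 * εhat / 3) * L * n / (εhat ^ 2 * I))
    (hε2 : ε2 = ε * Real.sqrt (n * (1 + ε) / (2 ^ (t - 1) * Ic))) :
    εhat ^ 2 / ε2 ^ 2 = ((2 + 2 * εhat / 3) / (2 + 2 * ε / 3)) * (Ic / ((1 + ε) * I)) ∧
      εhat ^ 2 / ε2 ^ 2 ≤ 1 ∧ εhat ≤ ε2 := by
  obtain ⟨hε0, hε1⟩ := hε
  obtain ⟨hh0, hh1⟩ := hεhat
  set P : ℝ := 2 ^ (t - 1) with hP
  have hP0 : (0:ℝ) < P := by positivity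
  have harg : 0 < n * (1 + ε) / (P * Ic) := by positivity
  have hε2pos : 0 < ε2 := by
    rw [hε2]
    exact mul_pos hε0 (Real.sqrt_pos.mpr harg)
  have hε2sq : ε2 ^ 2 = ε ^ 2 * (n * (1 + ε) / (P * Ic)) := by
    rw [hε2, mul_pow, Real.sq_sqrt harg.le]
  have heq : P * (2 + 2 * ε / 3) * L * (εhat ^ 2 * I) =
      (2 + 2 * εhat / 3) * L * n * ε ^ 2 := by
    have h := hN1.symm.trans hN2
    field_simp at h
    linear_combination (2 * L / 3) * h
  have heq' : P * (2 + 2 * ε / 3) * (εhat ^ 2 * I) = (2 + 2 * εhat / 3) * n * ε ^ 2 := by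
    apply mul_left_cancel₀ hL.ne'
    linear_combination heq
  have key : εhat ^ 2 / ε2 ^ 2 =
      ((2 + 2 * εhat / 3) / (2 + 2 * ε / 3)) * (Ic / ((1 + ε) * I)) := by
    rw [hε2sq]
    have h2e : (0:ℝ) < 2 + 2 * ε / 3 := by linarith
    field_simp
    linear_combination (3 / 2 : ℝ) * heq'
  have hle1 : εhat ^ 2 / ε2 ^ 2 ≤ 1 := by
    rw [key]
    have h1 : (2 + 2 * εhat / 3) / (2 + 2 * ε / 3) ≤ 1 := by
      apply div_le_one_of_le₀ (by linarith) (by linarith)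
    have h2 : Ic / ((1 + ε) * I) ≤ 1 := by
      apply div_le_one_of_le₀ hIcI (by positivity)
    calc (2 + 2 * εhat / 3) / (2 + 2 * ε / 3) * (Ic / ((1 + ε) * I))
        ≤ 1 * 1 := by
          apply mul_le_mul h1 h2 (by positivity) (by norm_num)
      _ = 1 := by norm_num
  have hsq : εhat ^ 2 ≤ ε2 ^ 2 := by
    have := (div_le_one (by positivity : (0:ℝ) < ε2 ^ 2)).mp hle1
    linarith
  exact ⟨key, hle1, by nlinarith [hsq, hε2pos, hh0]⟩
end
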